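/- arXiv:math/0002244 — 4 statements merged into one kernel-verified Lean document; each statement's English description precedes it below -/
import Mathlib

section
/- Let T: α = β⁰ ⊆ β¹ ⊆ ⋯ ⊆ β^k = β be a tableau with partition shapes and entries from [k], and let l be an integer at least the largest part of β. Then the complement T^C is itself a tableau with entries from [k]: each consecutive difference (l^i, β^{k−i})/(l^{i−1}, β^{k−i+1}) is a horizontal strip; T^C has inner border β and outer border (l^k, α); and for each i ∈ [k], the i-th horizontal strip of T^C occupies exactly those columns of {1, …, l} not occupied by the (k+1−i)-th horizontal strip of T. -/
/-- A partition: a weakly decreasing sequence of nonnegative integers,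
eventually zero (identified up to trailing zeroes). -/
def IsPartition (f : ℕ → ℕ) : Prop :=
  (∀ i, f (i + 1) ≤ f i) ∧ ∃ N, ∀ i, N ≤ i → f i = 0

/-- `b/a` is a horizontal strip: `a ⊆ b` and at most one box in each column. -/
def HStrip (a b : ℕ → ℕ) : Prop :=
  (∀ i, a i ≤ b i) ∧ (∀ i, b (i + 1) ≤ a i)

/-- A tableau with entries from `[k]`: a chain of partitions whose consecutive
differences are horizontal strips. -/
def IsTableau (k : ℕ) (T : ℕ → ℕ → ℕ) : Prop :=
  (∀ i, i ≤ k → IsPartition (T i)) ∧ ∀ i, i < k → HStrip (T i) (T (i + 1))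

/-- The complement of a tableau `T : α = β⁰ ⊆ ⋯ ⊆ βᵏ = β` with parameters `k` and `l`:
the chain `βᵏ ⊆ (l, β^{k-1}) ⊆ (l², β^{k-2}) ⊆ ⋯ ⊆ (lᵏ, β⁰)`. -/
def comp (k l : ℕ) (T : ℕ → ℕ → ℕ) : ℕ → ℕ → ℕ :=
  fun i j => if j < i then l else T (k - i) (j - i)

/-- Column `c` (with `1 ≤ c`) is occupied by the horizontal strip `b/a`. -/
def StripCol (a b : ℕ → ℕ) (c : ℕ) : Prop :=
  ∃ r, a r < c ∧ c ≤ b r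

/-- A partition is antitone. -/
lemma IsPartition.antitone {f : ℕ → ℕ} (hf : IsPartition f) :
    ∀ {a b : ℕ}, a ≤ b → f b ≤ f a := by
  intro a b hab
  exact antitone_nat_of_succ_le hf.1 hab

/-- Along a tableau chain, values increase. -/
lemma chain_le {k : ℕ} {T : ℕ → ℕ → ℕ} (hT : IsTableau k T) :
    ∀ m n, m ≤ n → n ≤ k → ∀ r, T m r ≤ T n r := by
  intro m n hmn
  induction n, hmn using Nat.le_induction with
  | base => intro _ r; exact le_rfl
  | succ n hmn ih =>
    intro hnk r
    exact (ih (by omega) r).trans ((hT.2 n (by omega)).1 r)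

/-- **The complement of a tableau is a tableau.**  Let `T : α = β⁰ ⊆ ⋯ ⊆ βᵏ = β` be a
tableau with entries from `[k]` and `l` at least the largest part of `β`.  Then `T^C` is
a tableau with entries from `[k]` (each consecutive difference is a horizontal strip),
it has inner border `β` and outer border `(lᵏ, α)`, and for each `i ∈ [k]` the `i`-th
horizontal strip of `T^C` occupies exactly those columns of `{1, …, l}` not occupied by
the `(k+1-i)`-th horizontal strip of `T`. -/
theorem complement_is_tableau (k l : ℕ) (T : ℕ → ℕ → ℕ)
    (hT : IsTableau k T) (hl : T k 0 ≤ l) :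
    (∀ i, i ≤ k → IsPartition (comp k l T i)) ∧
    (∀ i, i < k → HStrip (comp k l T i) (comp k l T (i + 1))) ∧
    (comp k l T 0 = T k) ∧
    (∀ j, comp k l T k j = if j < k then l else T 0 (j - k)) ∧
    (∀ i, 1 ≤ i → i ≤ k → ∀ c, 1 ≤ c → c ≤ l →
      (StripCol (comp k l T (i - 1)) (comp k l T i) c ↔
        ¬ StripCol (T (k - i)) (T (k - i + 1)) c)) := by
  have hl' : ∀ m, m ≤ k → T m 0 ≤ l := fun m hm => (chain_le hT m k hm le_rfl 0).trans hl
  have hpart : ∀ m, m ≤ k → IsPartition (T m) := hT.1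
  refine ⟨?_, ?_, ?_, ?_, ?_⟩
  · -- partitions
    intro i hi
    constructor
    · intro j
      simp only [comp]
      rcases lt_trichotomy (j + 1) i with h | h | h
      · simp [h, show j < i by omega]
      · have hj : ¬ (j + 1 < i) := by omega
        have hj2 : j < i := by omega
        simp only [if_neg hj, if_pos hj2]
        have : j + 1 - i = 0 := by omega
        rw [this]
        exact hl' (k - i) (by omega)
      · have hj : ¬ (j + 1 < i) := by omega
        have hj2 : ¬ (j < i) := by omega
        simp only [if_neg hj, if_neg hj2]
        have : j + 1 - i = (j - i) + 1 := by omega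
        rw [this]
        exact (hpart (k - i) (by omega)).1 (j - i)
    · obtain ⟨N, hN⟩ := (hpart (k - i) (by omega)).2
      exact ⟨N + i, fun j hj => by
        simp only [comp, if_neg (show ¬ j < i by omega)]
        exact hN (j - i) (by omega)⟩
  · -- horizontal strips
    intro i hi
    have hs := hT.2 (k - i - 1) (by omega)
    have hk1 : k - i - 1 + 1 = k - i := by omega
    rw [hk1] at hs
    constructor
    · intro j
      simp only [comp]
      rcases lt_trichotomy j i with h | h | h
      · simp [h, show j < i + 1 by omega]
      · subst h
        simp only [if_neg (lt_irrefl j), if_pos (by omega : j < j + 1)]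
        have : j - j = 0 := by omega
        rw [this]
        exact hl' (k - j) (by omega)
      · have h1 : ¬ j < i := by omega
        have h2 : ¬ j < i + 1 := by omega
        simp only [if_neg h1, if_neg h2]
        have e1 : k - (i + 1) = k - i - 1 := by omega
        have e2 : j - i = (j - (i + 1)) + 1 := by omega
        rw [e1, e2]
        exact hs.2 (j - (i + 1))
    · intro j
      simp only [comp]
      rcases lt_or_ge j i with h | h
      · simp [show j + 1 < i + 1 by omega, show j < i by omega]
      · have h1 : ¬ j + 1 < i + 1 := by omega
        have h2 : ¬ j < i := by omega
        simp only [if_neg h1, if_neg h2]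
        have e1 : k - (i + 1) = k - i - 1 := by omega
        have e2 : j + 1 - (i + 1) = j - i := by omega
        rw [e1, e2]
        exact hs.1 (j - i)
  · funext j
    simp [comp]
  · intro j
    simp [comp]
  · -- the column complementation statement
    intro i hi1 hik c hc1 hcl
    set a := T (k - i) with ha
    set b := T (k - i + 1) with hb
    have hsab : HStrip a b := by
      have := hT.2 (k - i) (by omega)
      exact this
    have hbpart : IsPartition b := hpart (k - i + 1) (by omega)
    have hapart : IsPartition a := hpart (k - i) (by omega)
    have hcomp1 : ∀ j, i - 1 ≤ j → comp k l T (i - 1) j = b (j - (i - 1)) := by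
      intro j hj
      simp only [comp, if_neg (show ¬ j < i - 1 by omega)]
      congr 1
      omega
    have hcomp2 : ∀ j, i ≤ j → comp k l T i j = a (j - i) := by
      intro j hj
      simp only [comp, if_neg (show ¬ j < i by omega)]
      rfl
    constructor
    · rintro ⟨r, h1, h2⟩
      -- r ≥ i - 1
      have hr : i - 1 ≤ r := by
        by_contra hcon
        have : comp k l T (i - 1) r = l := by
          simp [comp, show r < i - 1 by omega]
        omega
      rintro ⟨t, g1, g2⟩
      rcases eq_or_lt_of_le hr with hri | hri
      · -- r = i - 1 : b 0 < c, contradiction with c ≤ b t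
        rw [hcomp1 r hr] at h1
        rw [← hri] at h1
        simp only [Nat.sub_self] at h1
        have : b t ≤ b 0 := hbpart.antitone (Nat.zero_le t)
        omega
      · -- r ≥ i : b (s+1) < c ≤ a s for s = r - i
        have hri' : i ≤ r := by omega
        rw [hcomp1 r hr] at h1
        rw [hcomp2 r hri'] at h2
        have e : r - (i - 1) = (r - i) + 1 := by omega
        rw [e] at h1
        set s := r - i with hs
        -- g1 : a t < c, g2 : c ≤ b t; h1 : b (s+1) < c, h2 : c ≤ a s
        rcases le_or_gt t s with hts | hts
        · have : a s ≤ a t := hapart.antitone hts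
          omega
        · have : b t ≤ b (s + 1) := hbpart.antitone (by omega)
          omega
    · intro hns
      simp only [StripCol, not_exists, not_and, not_le] at hns
      rcases lt_or_ge (b 0) c with h0 | h0
      · -- witness r = i - 1
        refine ⟨i - 1, ?_, ?_⟩
        · rw [hcomp1 (i - 1) le_rfl]
          simpa using h0
        · simp [comp, show i - 1 < i by omega]
          omega
      · -- find minimal m with b m < c
        obtain ⟨N, hN⟩ := hbpart.2
        have hex : ∃ m, b m < c := ⟨N, by rw [hN N le_rfl]; omega⟩
        classical
        set m := Nat.find hex with hm
        have hmlt : b m < c := Nat.find_spec hex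
        have hm1 : 1 ≤ m := by
          rcases Nat.eq_zero_or_pos m with h | h
          · rw [h] at hmlt; omega
          · exact h
        have hbs : c ≤ b (m - 1) := by
          have := Nat.find_min hex (show m - 1 < m by omega)
          omega
        have has : c ≤ a (m - 1) := by
          by_contra hcon
          have := hns (m - 1) (by omega)
          omega
        refine ⟨i + (m - 1), ?_, ?_⟩
        · rw [hcomp1 (i + (m - 1)) (by omega)]
          have : i + (m - 1) - (i - 1) = m := by omega
          rw [this]
          exact hmlt
        · rw [hcomp2 (i + (m - 1)) (by omega)]
          have : i + (m - 1) - i = m - 1 := by omega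
          rw [this]
          exact has
end

section
/- Let α ⊆ β ⊆ δ be partitions with parts indexed 1, …, n such that β/α and δ/β are horizontal strips, let l be an integer at least the largest part of δ, and adopt the conventions α₀ = δ₀ = l and δ_{n+1} = 0. Define γ_i := max{δ_{i+1}, α_i} + min{δ_i, α_{i−1}} − β_i for 1 ≤ i ≤ n. Then γ is a partition with α ⊆ γ ⊆ δ, the skew shapes γ/α and δ/γ are horizontal strips, |γ/α| = |δ/β| and |δ/γ| = |β/α|, and the rule is symmetric: β_i = max{δ_{i+1}, α_i} + min{δ_i, α_{i−1}} − γ_i for all i. This is the local rule computing jeu de taquin on a pair of horizontal strips. -/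
/-- **The local rule computing jeu de taquin on a pair of horizontal strips.**
Let `α ⊆ β ⊆ δ` be partitions with parts indexed `1, …, n` such that `β/α` and `δ/β`
are horizontal strips, let `l` be an integer at least the largest part of `δ`, and adopt
the conventions `α₀ = δ₀ = l` and `δ_{n+1} = 0`.  Define
`γ_i := max{δ_{i+1}, α_i} + min{δ_i, α_{i−1}} − β_i` for `1 ≤ i ≤ n`.  Then `γ` is a
partition with `α ⊆ γ ⊆ δ`, the skew shapes `γ/α` and `δ/γ` are horizontal strips,
`|γ/α| = |δ/β|` and `|δ/γ| = |β/α|`, and the rule is symmetric: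
`β_i = max{δ_{i+1}, α_i} + min{δ_i, α_{i−1}} − γ_i` for all `i`. -/
theorem jeu_de_taquin_local_rule (n l : ℕ) (hn : 1 ≤ n) (α β δ γ : ℕ → ℕ)
    -- weakly decreasing parts (partitions) on the index range 1, …, n
    (hα : ∀ i, 1 ≤ i → i < n → α (i + 1) ≤ α i)
    (hβ : ∀ i, 1 ≤ i → i < n → β (i + 1) ≤ β i)
    (hδ : ∀ i, 1 ≤ i → i < n → δ (i + 1) ≤ δ i)
    -- conventions α₀ = δ₀ = l and δ_{n+1} = 0
    (hα0 : α 0 = l) (hδ0 : δ 0 = l) (hδn : δ (n + 1) = 0)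
    -- l is at least the largest part of δ
    (hl : δ 1 ≤ l)
    -- β/α is a horizontal strip
    (hβα : (∀ i, 1 ≤ i → i ≤ n → α i ≤ β i) ∧ (∀ i, 1 ≤ i → i < n → β (i + 1) ≤ α i))
    -- δ/β is a horizontal strip
    (hδβ : (∀ i, 1 ≤ i → i ≤ n → β i ≤ δ i) ∧ (∀ i, 1 ≤ i → i < n → δ (i + 1) ≤ β i))
    -- the local rule defining γ
    (hγ : ∀ i, 1 ≤ i → i ≤ n →
      γ i = max (δ (i + 1)) (α i) + min (δ i) (α (i - 1)) - β i) :
    -- γ is a partition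
    (∀ i, 1 ≤ i → i < n → γ (i + 1) ≤ γ i) ∧
    -- α ⊆ γ ⊆ δ
    (∀ i, 1 ≤ i → i ≤ n → α i ≤ γ i ∧ γ i ≤ δ i) ∧
    -- γ/α is a horizontal strip
    (∀ i, 1 ≤ i → i < n → γ (i + 1) ≤ α i) ∧
    -- δ/γ is a horizontal strip
    (∀ i, 1 ≤ i → i < n → δ (i + 1) ≤ γ i) ∧
    -- |γ/α| = |δ/β|
    ((∑ i ∈ Finset.Icc 1 n, γ i) + (∑ i ∈ Finset.Icc 1 n, β i)
      = (∑ i ∈ Finset.Icc 1 n, δ i) + (∑ i ∈ Finset.Icc 1 n, α i)) ∧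
    -- |δ/γ| = |β/α|
    ((∑ i ∈ Finset.Icc 1 n, δ i) + (∑ i ∈ Finset.Icc 1 n, α i)
      = (∑ i ∈ Finset.Icc 1 n, β i) + (∑ i ∈ Finset.Icc 1 n, γ i)) ∧
    -- symmetry of the rule
    (∀ i, 1 ≤ i → i ≤ n →
      β i = max (δ (i + 1)) (α i) + min (δ i) (α (i - 1)) - γ i) := by
  -- β is sandwiched between the max and the min
  have key : ∀ i, 1 ≤ i → i ≤ n →
      max (δ (i + 1)) (α i) ≤ β i ∧ β i ≤ min (δ i) (α (i - 1)) := by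
    intro i h1 h2
    constructor
    · apply max_le
      · rcases eq_or_lt_of_le h2 with rfl | h
        · simp [hδn]
        · exact hδβ.2 i h1 h
      · exact hβα.1 i h1 h2
    · apply le_min (hδβ.1 i h1 h2)
      rcases Nat.lt_or_ge i 2 with h | h
      · interval_cases i
        calc β 1 ≤ δ 1 := hδβ.1 1 le_rfl h2
          _ ≤ l := hl
          _ = α 0 := hα0.symm
      · obtain ⟨j, rfl⟩ : ∃ j, i = j + 1 := ⟨i - 1, by omega⟩
        have : β (j + 1) ≤ α j := hβα.2 j (by omega) (by omega)
        simpa using this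
  -- γ is sandwiched between the max and the min
  have keyγ : ∀ i, 1 ≤ i → i ≤ n →
      max (δ (i + 1)) (α i) ≤ γ i ∧ γ i ≤ min (δ i) (α (i - 1)) := by
    intro i h1 h2
    have hk := key i h1 h2
    rw [hγ i h1 h2]
    omega
  have mono : ∀ i, 1 ≤ i → i < n → γ (i + 1) ≤ γ i := by
    intro i h1 h2
    have h3 := (keyγ (i + 1) (by omega) (by omega)).2
    have h4 := (keyγ i h1 (by omega)).1
    simp only [Nat.add_sub_cancel] at h3
    calc γ (i + 1) ≤ min (δ (i + 1)) (α i) := h3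
      _ ≤ max (δ (i + 1)) (α i) := min_le_max
      _ ≤ γ i := h4
  have strip1 : ∀ i, 1 ≤ i → i < n → γ (i + 1) ≤ α i := by
    intro i h1 h2
    have h3 := (keyγ (i + 1) (by omega) (by omega)).2
    simp only [Nat.add_sub_cancel] at h3
    exact h3.trans (min_le_right _ _)
  have strip2 : ∀ i, 1 ≤ i → i < n → δ (i + 1) ≤ γ i := by
    intro i h1 h2
    exact le_trans (le_max_left _ _) (keyγ i h1 (by omega)).1
  have sandwich : ∀ i, 1 ≤ i → i ≤ n → α i ≤ γ i ∧ γ i ≤ δ i := by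
    intro i h1 h2
    have hk := keyγ i h1 h2
    exact ⟨le_trans (le_max_right _ _) hk.1, hk.2.trans (min_le_left _ _)⟩
  -- the sum identity, proved in ℤ via telescoping
  have hsum : (∑ i ∈ Finset.Icc 1 n, γ i) + (∑ i ∈ Finset.Icc 1 n, β i)
      = (∑ i ∈ Finset.Icc 1 n, δ i) + (∑ i ∈ Finset.Icc 1 n, α i) := by
    have tele := Finset.sum_range_sub'
      (fun k => (min (δ (k + 1)) (α k) : ℤ) - δ (k + 1)) n
    have hG0 : (min (δ 1) (α 0) : ℤ) - δ 1 = 0 := by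
      have h : min (δ 1) (α 0) = δ 1 := by omega
      have h2 : (min (δ 1) (α 0) : ℤ) = ((min (δ 1) (α 0) : ℕ) : ℤ) := by push_cast; ring
      rw [h2, h]; ring
    have hGn : (min (δ (n + 1)) (α n) : ℤ) - δ (n + 1) = 0 := by
      simp [hδn]
    have hterm : ∀ j ∈ Finset.range n,
        ((γ (j + 1) : ℤ) + β (j + 1))
          = ((δ (j + 1) : ℤ) + α (j + 1))
            + (((min (δ (j + 1)) (α j) : ℤ) - δ (j + 1))
              - ((min (δ (j + 2)) (α (j + 1)) : ℤ) - δ (j + 2))) := by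
      intro j hj
      simp only [Finset.mem_range] at hj
      have h1 : (1:ℕ) ≤ j + 1 := by omega
      have h2 : j + 1 ≤ n := by omega
      have hk := key (j + 1) h1 h2
      have hg := hγ (j + 1) h1 h2
      simp only [Nat.add_sub_cancel] at hk hg
      have hmax : max (δ (j + 2)) (α (j + 1)) + min (δ (j + 2)) (α (j + 1))
          = δ (j + 2) + α (j + 1) := by omega
      have : γ (j + 1) + β (j + 1)
          = max (δ (j + 1 + 1)) (α (j + 1)) + min (δ (j + 1)) (α j) := by omega
      push_cast at hmax
      have : (j:ℕ) + 1 + 1 = j + 2 := by omega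
      rw [this]
      linarith
    have hZ : (∑ j ∈ Finset.range n, ((γ (j + 1) : ℤ) + β (j + 1)))
        = ∑ j ∈ Finset.range n, ((δ (j + 1) : ℤ) + α (j + 1)) := by
      rw [Finset.sum_congr rfl hterm, Finset.sum_add_distrib, tele, hG0, hGn]
      ring
    have hIcc : ∀ f : ℕ → ℕ, (∑ i ∈ Finset.Icc 1 n, f i) = ∑ j ∈ Finset.range n, f (j + 1) := by
      intro f
      rw [← Finset.Ico_add_one_right_eq_Icc, Finset.sum_Ico_eq_sum_range]
      simp [add_comm]
    have := hZ
    rw [Finset.sum_add_distrib, Finset.sum_add_distrib] at this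
    have hcast : ((∑ i ∈ Finset.Icc 1 n, γ i : ℕ) : ℤ) + (∑ i ∈ Finset.Icc 1 n, β i : ℕ)
        = ((∑ i ∈ Finset.Icc 1 n, δ i : ℕ) : ℤ) + (∑ i ∈ Finset.Icc 1 n, α i : ℕ) := by
      push_cast [hIcc]
      convert this using 2
    exact_mod_cast hcast
  have hsym : ∀ i, 1 ≤ i → i ≤ n →
      β i = max (δ (i + 1)) (α i) + min (δ i) (α (i - 1)) - γ i := by
    intro i h1 h2
    have hk := key i h1 h2
    rw [hγ i h1 h2]
    omega
  exact ⟨mono, sandwich, strip1, strip2, hsum, hsum.symm.trans (by omega), hsym⟩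
end

section
/- Let α, β, γ be shapes each with parts indexed 1, …, m such that β/α and γ/α are horizontal strips. Define d_m := 0 and, for i = m, m−1, …, 2: δ_i := min{β_i + γ_i + d_i − α_i, α_{i−1}} and d_{i−1} := max{β_i + γ_i + d_i − α_i − α_{i−1}, 0}; finally δ₁ := β₁ + γ₁ + d₁ − α₁. Then δ =: C(α; β, γ) is a shape, δ/β and δ/γ are horizontal strips, |δ| + |α| = |β| + |γ|, the rule is symmetric in β and γ, and the rule is reversible: given shapes β, γ, δ with δ/β and δ/γ horizontal strips, there is a unique shape α with C(α; β, γ) = δ. -/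
/-- A shape: a finite weakly decreasing integer sequence, parts indexed `1, …, m`. -/
def DecrW (m : ℕ) (f : ℕ → ℤ) : Prop := ∀ i, 1 ≤ i → i < m → f (i + 1) ≤ f i

/-- `a ⊆ b` on parts `1, …, m`. -/
def SubW (m : ℕ) (a b : ℕ → ℤ) : Prop := ∀ i, 1 ≤ i → i ≤ m → a i ≤ b i

/-- `b/a` is a horizontal strip (at most one box per column). -/
def HSW (m : ℕ) (a b : ℕ → ℤ) : Prop :=
  SubW m a b ∧ ∀ i, 1 ≤ i → i < m → b (i + 1) ≤ a i

/-- The internal column insertion local rule `C(α; β, γ) = δ`, as a relation: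
`d_m := 0`; for `i = m, …, 2`: `δ_i := min{β_i + γ_i + d_i − α_i, α_{i−1}}` and
`d_{i−1} := max{β_i + γ_i + d_i − α_i − α_{i−1}, 0}`; finally
`δ₁ := β₁ + γ₁ + d₁ − α₁`. -/
def CRel (m : ℕ) (α β γ δ : ℕ → ℤ) : Prop :=
  ∃ d : ℕ → ℤ, d m = 0 ∧
    (∀ i, 2 ≤ i → i ≤ m →
      δ i = min (β i + γ i + d i - α i) (α (i - 1)) ∧
      d (i - 1) = max (β i + γ i + d i - α i - α (i - 1)) 0) ∧
    δ 1 = β 1 + γ 1 + d 1 - α 1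

/-- The uniquely determined carry sequence of the inverse rule. -/
def Erec (β γ δ : ℕ → ℤ) : ℕ → ℤ
  | 0 => 0
  | k+1 => max (δ (k+2) + δ (k+1) + Erec β γ δ k - β (k+1) - γ (k+1)) 0

lemma Erec_zero (β γ δ : ℕ → ℤ) : Erec β γ δ 0 = 0 := rfl

lemma Erec_succ (β γ δ : ℕ → ℤ) (k : ℕ) :
    Erec β γ δ (k+1) = max (δ (k+2) + δ (k+1) + Erec β γ δ k - β (k+1) - γ (k+1)) 0 := rfl

lemma Erec_nonneg (β γ δ : ℕ → ℤ) : ∀ k, 0 ≤ Erec β γ δ k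
  | 0 => le_refl 0
  | _+1 => le_max_right _ _

/-- In any instance of the local rule, the carries and `α` are determined by `β, γ, δ`. -/
lemma crel_determined (m : ℕ) (α β γ δ d : ℕ → ℤ)
    (hdm : d m = 0)
    (hrec : ∀ i, 2 ≤ i → i ≤ m →
      δ i = min (β i + γ i + d i - α i) (α (i - 1)) ∧
      d (i - 1) = max (β i + γ i + d i - α i - α (i - 1)) 0)
    (h1 : δ 1 = β 1 + γ 1 + d 1 - α 1) :
    ∀ k, 1 ≤ k → k ≤ m →
      α k = β k + γ k - δ k - Erec β γ δ (k-1) +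
        (if k < m then Erec β γ δ k else 0) := by
  have haux : ∀ k, 1 ≤ k → k ≤ m →
      α k + δ k + (if 2 ≤ k then d (k-1) else 0) = β k + γ k + d k := by
    intro k hk1 hkm
    by_cases h2 : 2 ≤ k
    · obtain ⟨ha, hb⟩ := hrec k h2 hkm
      rw [if_pos h2]
      omega
    · have hk : k = 1 := by omega
      subst hk
      rw [if_neg h2]
      omega
  have dEq : ∀ k, 1 ≤ k → k < m → d k = Erec β γ δ k := by
    intro k
    induction k with
    | zero => omega
    | succ k ih =>
      intro _ hkm
      have hx := haux (k+1) (by omega) (by omega)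
      have hP : (if 2 ≤ k + 1 then d (k+1-1) else 0) = Erec β γ δ k := by
        by_cases hk : 1 ≤ k
        · rw [if_pos (by omega), show k+1-1 = k from rfl, ih hk (by omega)]
        · have : k = 0 := by omega
          subst this
          rw [if_neg (by omega), Erec_zero]
      rw [hP] at hx
      obtain ⟨h2a, h2b⟩ := hrec (k+2) (by omega) (by omega)
      rw [show k+2-1 = k+1 from rfl] at h2a h2b
      rw [Erec_succ]
      omega
  intro k hk1 hkm
  have hx := haux k hk1 hkm
  have hP : (if 2 ≤ k then d (k-1) else 0) = Erec β γ δ (k-1) := by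
    by_cases h2 : 2 ≤ k
    · rw [if_pos h2, dEq (k-1) (by omega) (by omega)]
    · have : k = 1 := by omega
      subst this
      rw [if_neg h2, Erec_zero]
  rw [hP] at hx
  by_cases hkm' : k < m
  · rw [if_pos hkm', ← dEq k hk1 hkm']
    omega
  · have : k = m := by omega
    subst this
    rw [if_neg hkm']
    omega

/-- **The internal column insertion local rule is a reversible insertion local rule.**
Let `α, β, γ` be shapes with parts indexed `1, …, m` such that `β/α` and `γ/α` are
horizontal strips, and let `δ = C(α; β, γ)` be defined by the recursion above.  Then
`δ` is a shape, `δ/β` and `δ/γ` are horizontal strips, `|δ| + |α| = |β| + |γ|`, the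
rule is symmetric in `β` and `γ`, and the rule is reversible: given shapes `β, γ, δ`
with `δ/β` and `δ/γ` horizontal strips there is a unique shape `α` with
`C(α; β, γ) = δ`. -/
theorem internal_column_insertion_local_rule (m : ℕ) (hm : 1 ≤ m)
    (α β γ δ : ℕ → ℤ)
    (hα : DecrW m α) (hβ : DecrW m β) (hγ : DecrW m γ)
    (hβα : HSW m α β) (hγα : HSW m α γ)
    (hδ : CRel m α β γ δ) :
    DecrW m δ ∧
    HSW m β δ ∧ HSW m γ δ ∧
    ((∑ i ∈ Finset.Icc 1 m, δ i) + (∑ i ∈ Finset.Icc 1 m, α i)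
      = (∑ i ∈ Finset.Icc 1 m, β i) + (∑ i ∈ Finset.Icc 1 m, γ i)) ∧
    CRel m α γ β δ ∧
    (∀ β' γ' δ' : ℕ → ℤ, DecrW m β' → DecrW m γ' → DecrW m δ' →
      HSW m β' δ' → HSW m γ' δ' →
      (∃ α' : ℕ → ℤ, DecrW m α' ∧ HSW m α' β' ∧ HSW m α' γ' ∧ CRel m α' β' γ' δ') ∧
      (∀ α₁ α₂ : ℕ → ℤ,
        DecrW m α₁ → HSW m α₁ β' → HSW m α₁ γ' → CRel m α₁ β' γ' δ' →
        DecrW m α₂ → HSW m α₂ β' → HSW m α₂ γ' → CRel m α₂ β' γ' δ' →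
        ∀ i, 1 ≤ i → i ≤ m → α₁ i = α₂ i)) := by
  obtain ⟨d, hdm, hrec, h1⟩ := hδ
  -- carries are nonnegative
  have hd0 : ∀ i, 1 ≤ i → i ≤ m → 0 ≤ d i := by
    have key : ∀ j i, 1 ≤ i → i ≤ m → m - i ≤ j → 0 ≤ d i := by
      intro j
      induction j with
      | zero =>
        intro i h1' h2' h3'
        have : i = m := by omega
        rw [this, hdm]
      | succ j ih =>
        intro i hi1 hi2 hij
        by_cases h : i = m
        · rw [h, hdm]
        · have h5 := (hrec (i+1) (by omega) (by omega)).2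
          rw [show i+1-1 = i from rfl] at h5
          rw [h5]
          exact le_max_right _ _
    exact fun i a b => key m i a b (by omega)
  -- β i ≤ δ i and γ i ≤ δ i and α i ≤ δ i
  have hβδ : ∀ i, 1 ≤ i → i ≤ m → β i ≤ δ i := by
    intro i hi1 him
    by_cases h : 2 ≤ i
    · obtain ⟨ha, _⟩ := hrec i h him
      have hst := hβα.2 (i-1) (by omega) (by omega)
      rw [Nat.sub_add_cancel (by omega)] at hst
      have hγi := hγα.1 i (by omega) him
      have := hd0 i (by omega) him
      omega
    · have : i = 1 := by omega
      subst this
      have := hγα.1 1 le_rfl him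
      have := hd0 1 le_rfl him
      omega
  have hγδ : ∀ i, 1 ≤ i → i ≤ m → γ i ≤ δ i := by
    intro i hi1 him
    by_cases h : 2 ≤ i
    · obtain ⟨ha, _⟩ := hrec i h him
      have hst := hγα.2 (i-1) (by omega) (by omega)
      rw [Nat.sub_add_cancel (by omega)] at hst
      have hβi := hβα.1 i (by omega) him
      have := hd0 i (by omega) him
      omega
    · have : i = 1 := by omega
      subst this
      have := hβα.1 1 le_rfl him
      have := hd0 1 le_rfl him
      omega
  have hαδ : ∀ i, 1 ≤ i → i ≤ m → α i ≤ δ i := by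
    intro i hi1 him
    by_cases h : 2 ≤ i
    · obtain ⟨ha, _⟩ := hrec i h him
      have hdec := hα (i-1) (by omega) (by omega)
      rw [Nat.sub_add_cancel (by omega)] at hdec
      have := hβα.1 i (by omega) him
      have := hγα.1 i (by omega) him
      have := hd0 i (by omega) him
      omega
    · have : i = 1 := by omega
      subst this
      have := hβα.1 1 le_rfl him
      have := hγα.1 1 le_rfl him
      have := hd0 1 le_rfl him
      omega
  have hδα : ∀ i, 1 ≤ i → i < m → δ (i+1) ≤ α i := by
    intro i hi1 him
    obtain ⟨ha, _⟩ := hrec (i+1) (by omega) (by omega)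
    rw [show i+1-1 = i from rfl] at ha
    rw [ha]
    exact min_le_right _ _
  refine ⟨?_, ⟨hβδ, ?_⟩, ⟨hγδ, ?_⟩, ?_, ?_, ?_⟩
  · -- DecrW δ
    intro i hi1 him
    exact le_trans (hδα i hi1 him) (hαδ i hi1 (le_of_lt him))
  · -- strip δ/β
    intro i hi1 him
    exact le_trans (hδα i hi1 him) (hβα.1 i hi1 (le_of_lt him))
  · -- strip δ/γ
    intro i hi1 him
    exact le_trans (hδα i hi1 him) (hγα.1 i hi1 (le_of_lt him))
  · -- sums
    have hsum : ∀ k, 1 ≤ k → k ≤ m →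
        (∑ i ∈ Finset.Icc 1 k, (δ i + α i - β i - γ i)) = d k := by
      intro k
      induction k with
      | zero => omega
      | succ k ih =>
        intro _ hkm
        by_cases h : 1 ≤ k
        · rw [Finset.sum_Icc_succ_top (by omega), ih h (by omega)]
          obtain ⟨ha, hb⟩ := hrec (k+1) (by omega) hkm
          rw [show k+1-1 = k from rfl] at ha hb
          omega
        · have : k = 0 := by omega
          subst this
          simp only [Nat.zero_add, Finset.Icc_self, Finset.sum_singleton]
          omega
    have hS := hsum m hm le_rfl
    rw [hdm] at hS
    have e : ∑ i ∈ Finset.Icc 1 m, (δ i + α i - β i - γ i)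
        = (∑ i ∈ Finset.Icc 1 m, δ i) + (∑ i ∈ Finset.Icc 1 m, α i)
          - (∑ i ∈ Finset.Icc 1 m, β i) - (∑ i ∈ Finset.Icc 1 m, γ i) := by
      rw [Finset.sum_sub_distrib, Finset.sum_sub_distrib, Finset.sum_add_distrib]
    rw [e] at hS
    linarith
  · -- symmetry
    refine ⟨d, hdm, ?_, by omega⟩
    intro i h2 him
    obtain ⟨ha, hb⟩ := hrec i h2 him
    constructor <;> omega
  · -- reversibility
    intro β' γ' δ' hβ' hγ' hδ' hβδ' hγδ'
    have hE0 := Erec_nonneg β' γ' δ'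
    have hEub : ∀ i, 1 ≤ i → i + 1 ≤ m →
        Erec β' γ' δ' i ≤ Erec β' γ' δ' (i-1) + δ' i - γ' i ∧
        Erec β' γ' δ' i ≤ Erec β' γ' δ' (i-1) + δ' i - β' i := by
      intro i hi1 him
      obtain ⟨k, rfl⟩ : ∃ k, i = k + 1 := ⟨i-1, by omega⟩
      rw [Erec_succ, show k+1-1 = k from rfl]
      have s1 : δ' (k+2) ≤ β' (k+1) := hβδ'.2 (k+1) (by omega) (by omega)
      have s2 : δ' (k+2) ≤ γ' (k+1) := hγδ'.2 (k+1) (by omega) (by omega)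
      have s3 := hβδ'.1 (k+1) (by omega) (by omega)
      have s4 := hγδ'.1 (k+1) (by omega) (by omega)
      have := hE0 k
      constructor <;> omega
    have hElb : ∀ i, 1 ≤ i → i < m →
        δ' (i+1) + δ' i + Erec β' γ' δ' (i-1) - β' i - γ' i ≤ Erec β' γ' δ' i := by
      intro i hi1 him
      obtain ⟨k, rfl⟩ : ∃ k, i = k + 1 := ⟨i-1, by omega⟩
      rw [Erec_succ, show k+1-1 = k from rfl]
      exact le_max_left _ _
    set A : ℕ → ℤ := fun k =>
      β' k + γ' k - δ' k - Erec β' γ' δ' (k-1) + (if k < m then Erec β' γ' δ' k else 0)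
      with hA
    have hAub : ∀ i, 1 ≤ i → i ≤ m → A i ≤ β' i ∧ A i ≤ γ' i := by
      intro i hi1 him
      rw [hA]
      dsimp only
      by_cases h : i < m
      · rw [if_pos h]
        have := hEub i hi1 (by omega)
        constructor <;> omega
      · rw [if_neg h]
        have := hβδ'.1 i hi1 him
        have := hγδ'.1 i hi1 him
        have := hE0 (i-1)
        constructor <;> omega
    have hAlb : ∀ i, 1 ≤ i → i < m → δ' (i+1) ≤ A i := by
      intro i hi1 him
      rw [hA]
      dsimp only
      rw [if_pos him]
      have := hElb i hi1 him
      omega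
    constructor
    · -- existence
      refine ⟨A, ?_, ⟨?_, ?_⟩, ⟨?_, ?_⟩, ?_⟩
      · -- DecrW A
        intro i hi1 him
        have h1' := (hAub (i+1) (by omega) (by omega)).1
        have h2' := hβδ'.1 (i+1) (by omega) (by omega)
        have h3' := hAlb i hi1 him
        omega
      · exact fun i a b => (hAub i a b).1
      · intro i hi1 him
        exact le_trans (hβδ'.1 (i+1) (by omega) (by omega)) (hAlb i hi1 him)
      · exact fun i a b => (hAub i a b).2
      · intro i hi1 him
        exact le_trans (hγδ'.1 (i+1) (by omega) (by omega)) (hAlb i hi1 him)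
      · -- CRel m A β' γ' δ'
        refine ⟨fun k => if k < m then Erec β' γ' δ' k else 0, by simp, ?_, ?_⟩
        · intro i h2 him
          obtain ⟨k, rfl⟩ : ∃ k, i = k + 2 := ⟨i-2, by omega⟩
          rw [show k+2-1 = k+1 from rfl]
          rw [hA]
          dsimp only
          rw [show k+2-1 = k+1 from rfl, show k+1-1 = k from rfl]
          rw [if_pos (show k+1 < m by omega)]
          have hE1 := Erec_succ β' γ' δ' k
          by_cases h2m : k + 2 < m
          · rw [if_pos h2m]
            constructor <;> omega
          · rw [if_neg h2m]
            constructor <;> omega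
        · rw [hA]
          dsimp only
          rw [show (1:ℕ)-1 = 0 from rfl, Erec_zero]
          by_cases h : 1 < m
          · rw [if_pos h]
            omega
          · rw [if_neg h]
            omega
    · -- uniqueness
      intro α₁ α₂ _ _ _ hc₁ _ _ _ hc₂ i hi1 him
      obtain ⟨d₁, e₁, f₁, g₁⟩ := hc₁
      obtain ⟨d₂, e₂, f₂, g₂⟩ := hc₂
      rw [crel_determined m α₁ β' γ' δ' d₁ e₁ f₁ g₁ i hi1 him,
        crel_determined m α₂ β' γ' δ' d₂ e₂ f₂ g₂ i hi1 him]
end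

section
/- Let C denote the word k (k−1) ⋯ 2 1 over the alphabet [k]. For all words w and v over [k]: (i) C·w is Knuth-equivalent to w·C; (ii) C·w is Knuth-equivalent to C·v if and only if w is Knuth-equivalent to v. -/
/-- Elementary Knuth transformations on words:
`x z y ≃ z x y` for `x ≤ y < z`, and `y x z ≃ y z x` for `x < y ≤ z`. -/
inductive KnuthStep : List ℕ → List ℕ → Prop
  | xzy (u v : List ℕ) (x y z : ℕ) (h1 : x ≤ y) (h2 : y < z) :
      KnuthStep (u ++ x :: z :: y :: v) (u ++ z :: x :: y :: v)
  | yxz (u v : List ℕ) (x y z : ℕ) (h1 : x < y) (h2 : y ≤ z) :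
      KnuthStep (u ++ y :: x :: z :: v) (u ++ y :: z :: x :: v)

/-- Knuth equivalence of words: the equivalence relation generated by the
elementary Knuth transformations. -/
def KnuthEquiv : List ℕ → List ℕ → Prop := Relation.EqvGen KnuthStep

/-- The word `C = k (k−1) ⋯ 2 1` of a full column. -/
def fullColumn (k : ℕ) : List ℕ := (List.range k).map (fun i => k - i)

namespace KnuthAux

theorem ke_refl (w : List ℕ) : KnuthEquiv w w := Relation.EqvGen.refl w
theorem ke_symm {u v : List ℕ} (h : KnuthEquiv u v) : KnuthEquiv v u := Relation.EqvGen.symm _ _ h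
theorem ke_trans {u v w : List ℕ} (h : KnuthEquiv u v) (h' : KnuthEquiv v w) : KnuthEquiv u w :=
  Relation.EqvGen.trans _ _ _ h h'
theorem ke_rel {u v : List ℕ} (h : KnuthStep u v) : KnuthEquiv u v := Relation.EqvGen.rel _ _ h

theorem ke_map {f : List ℕ → List ℕ} (hf : ∀ a b, KnuthStep a b → KnuthStep (f a) (f b))
    {u v : List ℕ} (h : KnuthEquiv u v) : KnuthEquiv (f u) (f v) := by
  induction h with
  | rel a b hab => exact ke_rel (hf _ _ hab)
  | refl a => exact ke_refl _
  | symm a b _ ih => exact ke_symm ih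
  | trans a b c _ _ ih1 ih2 => exact ke_trans ih1 ih2

theorem step_append_left (l : List ℕ) {u v : List ℕ} (h : KnuthStep u v) :
    KnuthStep (l ++ u) (l ++ v) := by
  cases h with
  | xzy p s x y z h1 h2 =>
      rw [← List.append_assoc, ← List.append_assoc]
      exact KnuthStep.xzy (l ++ p) s x y z h1 h2
  | yxz p s x y z h1 h2 =>
      rw [← List.append_assoc, ← List.append_assoc]
      exact KnuthStep.yxz (l ++ p) s x y z h1 h2

theorem step_append_right (r : List ℕ) {u v : List ℕ} (h : KnuthStep u v) :
    KnuthStep (u ++ r) (v ++ r) := by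
  cases h with
  | xzy p s x y z h1 h2 =>
      have : ∀ t : List ℕ, (p ++ x :: z :: y :: s) ++ r = p ++ x :: z :: y :: (s ++ r) := by
        intro t; simp
      simp only [List.append_assoc, List.cons_append]
      exact KnuthStep.xzy p (s ++ r) x y z h1 h2
  | yxz p s x y z h1 h2 =>
      simp only [List.append_assoc, List.cons_append]
      exact KnuthStep.yxz p (s ++ r) x y z h1 h2

theorem ke_append_left (l : List ℕ) {u v : List ℕ} (h : KnuthEquiv u v) :
    KnuthEquiv (l ++ u) (l ++ v) := ke_map (fun _ _ => step_append_left l) h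

theorem ke_append_right (r : List ℕ) {u v : List ℕ} (h : KnuthEquiv u v) :
    KnuthEquiv (u ++ r) (v ++ r) := ke_map (fun _ _ => step_append_right r) h

theorem ke_cons (a : ℕ) {u v : List ℕ} (h : KnuthEquiv u v) :
    KnuthEquiv (a :: u) (a :: v) := ke_append_left [a] h

theorem fullColumn_succ (m : ℕ) : fullColumn (m + 1) = (m + 1) :: fullColumn m := by
  simp [fullColumn, List.range_succ_eq_map, List.map_map, Function.comp]

-- move a letter m (> all) left within decreasing run: run j ++ [m] ≃ j :: m :: run (j-1)
theorem run_lemma : ∀ j m, 1 ≤ j → j < m →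
    KnuthEquiv (fullColumn j ++ [m]) (j :: m :: fullColumn (j - 1))
  | 0, m, h, _ => by omega
  | 1, m, _, hm => by
      simp [fullColumn]
      exact ke_refl _
  | (j+2), m, _, hm => by
      have ih := run_lemma (j+1) m (by omega) (by omega)
      have h2 : KnuthStep ([] ++ (j+2) :: (j+1) :: m :: fullColumn j)
          ([] ++ (j+2) :: m :: (j+1) :: fullColumn j) :=
        KnuthStep.yxz [] (fullColumn j) (j+1) (j+2) m (by omega) (by omega)
      simp only [List.nil_append] at h2
      have key : KnuthEquiv (fullColumn (j+2) ++ [m]) ((j+2) :: m :: (j+1) :: fullColumn j) := by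
        rw [fullColumn_succ, List.cons_append]
        exact ke_trans (ke_cons _ (by simpa [show j+1-1 = j by omega] using ih)) (ke_rel h2)
      simpa [show j+2-1 = j+1 by omega, fullColumn_succ j] using key

theorem col_comm : ∀ m a, 1 ≤ a → a ≤ m →
    KnuthEquiv (fullColumn m ++ [a]) (a :: fullColumn m) := by
  intro m
  induction m with
  | zero => intro a h1 h2; omega
  | succ m ih =>
      intro a h1 h2
      rcases Nat.lt_or_ge a (m+1) with hlt | hge
      · -- a ≤ m
        rw [fullColumn_succ]
        have ih' := ih a h1 (by omega)
        have h1' : KnuthEquiv ((m+1) :: (fullColumn m ++ [a]))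
            ((m+1) :: a :: fullColumn m) := ke_cons _ ih'
        -- now swap (m+1) a at front: need fullColumn m nonempty, i.e. m ≥ 1
        have hm1 : 1 ≤ m := by omega
        obtain ⟨t, ht⟩ : ∃ t, fullColumn m = m :: t := by
          cases m with
          | zero => omega
          | succ m' => exact ⟨fullColumn m', fullColumn_succ m'⟩
        have h2'' : KnuthEquiv ((m+1) :: a :: fullColumn m) (a :: (m+1) :: fullColumn m) := by
          rw [ht]
          have := KnuthStep.xzy ([] : List ℕ) t a m (m+1) (by omega) (by omega)
          exact ke_symm (by simpa using ke_rel this)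
        refine ke_trans ?_ (ke_trans h1' h2'')
        simp [List.cons_append]; exact ke_refl _
      · -- a = m+1
        have ha : a = m + 1 := by omega
        subst ha
        rw [fullColumn_succ]
        cases m with
        | zero => simp [fullColumn]; exact ke_refl _
        | succ m' =>
            -- run (m'+2) ++ [m'+2] = (m'+2) :: (run (m'+1) ++ [m'+2])
            have ih' := run_lemma (m'+1) (m'+2) (by omega) (by omega)
            have h1' : KnuthEquiv ((m'+2) :: (fullColumn (m'+1) ++ [m'+2]))
                ((m'+2) :: (m'+1) :: (m'+2) :: fullColumn m') := ke_cons _ ih'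
            have h2' : KnuthEquiv ((m'+2) :: (m'+1) :: (m'+2) :: fullColumn m')
                ((m'+2) :: (m'+2) :: (m'+1) :: fullColumn m') := by
              have := KnuthStep.yxz ([] : List ℕ) (fullColumn m') (m'+1) (m'+2) (m'+2)
                (by omega) (by omega)
              simpa using ke_rel this
            refine ke_trans ?_ (ke_trans h1' (ke_trans h2' ?_))
            · simp [List.cons_append]; exact ke_refl _
            · rw [fullColumn_succ m']
              exact ke_refl _

theorem col_comm_word (k : ℕ) : ∀ (w : List ℕ), (∀ x ∈ w, 1 ≤ x ∧ x ≤ k) →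
    KnuthEquiv (fullColumn k ++ w) (w ++ fullColumn k) := by
  intro w
  induction w with
  | nil => intro _; simp; exact ke_refl _
  | cons a w ih =>
      intro hw
      obtain ⟨ha1, ha2⟩ := hw a (by simp)
      have h1 : KnuthEquiv (fullColumn k ++ a :: w) ((a :: fullColumn k) ++ w) := by
        have := ke_append_right w (col_comm k a ha1 ha2)
        simpa using this
      have h2 : KnuthEquiv (a :: (fullColumn k ++ w)) (a :: (w ++ fullColumn k)) :=
        ke_cons a (ih (fun x hx => hw x (by simp [hx])))
      simpa using ke_trans h1 h2

def rowIns (a : ℕ) : List ℕ → List ℕ × Option ℕ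
  | [] => ([a], none)
  | b :: r => if a < b then (a :: r, some b) else (b :: (rowIns a r).1, (rowIns a r).2)

@[simp] theorem rowIns_nil (a : ℕ) : rowIns a [] = ([a], none) := rfl

theorem rowIns_cons_gt {a b : ℕ} (r : List ℕ) (h : a < b) :
    rowIns a (b :: r) = (a :: r, some b) := by simp [rowIns, h]

theorem rowIns_cons_le {a b : ℕ} (r : List ℕ) (h : b ≤ a) :
    rowIns a (b :: r) = (b :: (rowIns a r).1, (rowIns a r).2) := by
  simp [rowIns, Nat.not_lt.2 h]

theorem rowIns_mem {a c : ℕ} : ∀ {r : List ℕ}, c ∈ (rowIns a r).1 → c ∈ r ∨ c = a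
  | [], h => Or.inr (by simpa using h)
  | b :: r, h => by
      by_cases hb : a < b
      · rw [rowIns_cons_gt r hb] at h
        rcases List.mem_cons.1 h with h | h
        · exact Or.inr h
        · exact Or.inl (List.mem_cons_of_mem _ h)
      · rw [rowIns_cons_le r (Nat.not_lt.1 hb)] at h
        rcases List.mem_cons.1 h with h | h
        · exact Or.inl (h ▸ List.mem_cons_self)
        · rcases rowIns_mem h with h | h
          · exact Or.inl (List.mem_cons_of_mem _ h)
          · exact Or.inr h

theorem rowIns_self_mem (a : ℕ) : ∀ (r : List ℕ), a ∈ (rowIns a r).1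
  | [] => by simp
  | b :: r => by
      by_cases hb : a < b
      · rw [rowIns_cons_gt r hb]; simp
      · rw [rowIns_cons_le r (Nat.not_lt.1 hb)]
        exact List.mem_cons_of_mem _ (rowIns_self_mem a r)

theorem rowIns_fst_ne_nil (a : ℕ) (r : List ℕ) : (rowIns a r).1 ≠ [] :=
  List.ne_nil_of_mem (rowIns_self_mem a r)

theorem rowIns_bump_gt {a b : ℕ} : ∀ {r : List ℕ}, (rowIns a r).2 = some b → a < b
  | [], h => by simp at h
  | c :: r, h => by
      by_cases hc : a < c
      · rw [rowIns_cons_gt r hc] at h; simp at h; omega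
      · rw [rowIns_cons_le r (Nat.not_lt.1 hc)] at h; exact rowIns_bump_gt h

theorem rowIns_bump_mem {a b : ℕ} : ∀ {r : List ℕ}, (rowIns a r).2 = some b → b ∈ r
  | [], h => by simp at h
  | c :: r, h => by
      by_cases hc : a < c
      · rw [rowIns_cons_gt r hc] at h; simp at h; simp [h]
      · rw [rowIns_cons_le r (Nat.not_lt.1 hc)] at h
        exact List.mem_cons_of_mem _ (rowIns_bump_mem h)

theorem rowIns_bump_none {a : ℕ} : ∀ {r : List ℕ}, (rowIns a r).2 = none → ∀ c ∈ r, c ≤ a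
  | [], _, c, hc => by simp at hc
  | b :: r, h, c, hc => by
      by_cases hb : a < b
      · rw [rowIns_cons_gt r hb] at h; simp at h
      · rw [rowIns_cons_le r (Nat.not_lt.1 hb)] at h
        rcases List.mem_cons.1 hc with rfl | hc
        · omega
        · exact rowIns_bump_none h c hc

theorem rowIns_bump_some_of_mem {a c : ℕ} {r : List ℕ} (hc : c ∈ r) (h : a < c) :
    ∃ b, (rowIns a r).2 = some b := by
  cases hb : (rowIns a r).2 with
  | none => exact absurd (rowIns_bump_none hb c hc) (by omega)
  | some b => exact ⟨b, rfl⟩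

theorem rowIns_bump_none_row {a : ℕ} : ∀ {r : List ℕ}, (rowIns a r).2 = none →
    (rowIns a r).1 = r ++ [a]
  | [], _ => by simp
  | b :: r, h => by
      by_cases hb : a < b
      · rw [rowIns_cons_gt r hb] at h; simp at h
      · rw [rowIns_cons_le r (Nat.not_lt.1 hb)] at h ⊢
        simp [rowIns_bump_none_row h]

theorem rowIns_bump_min {a b : ℕ} : ∀ {r : List ℕ}, List.Pairwise (· ≤ ·) r →
    (rowIns a r).2 = some b → ∀ c ∈ r, a < c → b ≤ c
  | [], _, h => by simp at h
  | d :: r, hs, h => by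
      by_cases hd : a < d
      · rw [rowIns_cons_gt r hd] at h
        simp only [Option.some.injEq] at h
        subst h
        intro c hc _
        rcases List.mem_cons.1 hc with rfl | hc
        · exact le_refl _
        · exact (List.pairwise_cons.1 hs).1 c hc
      · rw [rowIns_cons_le r (Nat.not_lt.1 hd)] at h
        intro c hc hac
        rcases List.mem_cons.1 hc with rfl | hc
        · omega
        · exact rowIns_bump_min (List.pairwise_cons.1 hs).2 h c hc hac

theorem rowIns_sorted {a : ℕ} : ∀ {r : List ℕ}, List.Pairwise (· ≤ ·) r →
    List.Pairwise (· ≤ ·) (rowIns a r).1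
  | [], _ => by simp
  | b :: r, hs => by
      obtain ⟨hb, hr⟩ := List.pairwise_cons.1 hs
      by_cases hab : a < b
      · rw [rowIns_cons_gt r hab]
        exact List.pairwise_cons.2 ⟨fun c hc => le_trans (le_of_lt hab) (hb c hc), hr⟩
      · rw [rowIns_cons_le r (Nat.not_lt.1 hab)]
        refine List.pairwise_cons.2 ⟨fun c hc => ?_, rowIns_sorted hr⟩
        rcases rowIns_mem hc with h | rfl
        · exact hb c h
        · omega

def tIns (a : ℕ) : List (List ℕ) → List (List ℕ)
  | [] => [[a]]
  | r :: rest =>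
    match (rowIns a r).2 with
    | none => (rowIns a r).1 :: rest
    | some b => (rowIns a r).1 :: tIns b rest

@[simp] theorem tIns_nil (a : ℕ) : tIns a [] = [[a]] := rfl

theorem tIns_cons_none {a : ℕ} {r : List ℕ} (rest : List (List ℕ))
    (h : (rowIns a r).2 = none) : tIns a (r :: rest) = (rowIns a r).1 :: rest := by
  simp [tIns, h]

theorem tIns_cons_some {a b : ℕ} {r : List ℕ} (rest : List (List ℕ))
    (h : (rowIns a r).2 = some b) : tIns a (r :: rest) = (rowIns a r).1 :: tIns b rest := by
  simp [tIns, h]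

def tInsL (T : List (List ℕ)) (ls : List ℕ) : List (List ℕ) := ls.foldl (fun T a => tIns a T) T

@[simp] theorem tInsL_nil (T : List (List ℕ)) : tInsL T [] = T := rfl
@[simp] theorem tInsL_cons (T : List (List ℕ)) (a : ℕ) (ls : List ℕ) :
    tInsL T (a :: ls) = tInsL (tIns a T) ls := rfl

theorem tInsL_append (T : List (List ℕ)) (l1 l2 : List ℕ) :
    tInsL T (l1 ++ l2) = tInsL (tInsL T l1) l2 := List.foldl_append ..

def rowInsSeq (r : List ℕ) : List ℕ → List ℕ × List ℕ
  | [] => (r, [])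
  | a :: as =>
      ((rowInsSeq (rowIns a r).1 as).1,
        (rowIns a r).2.toList ++ (rowInsSeq (rowIns a r).1 as).2)

@[simp] theorem rowInsSeq_nil (r : List ℕ) : rowInsSeq r [] = (r, []) := rfl

theorem thread : ∀ (ls : List ℕ) (r : List ℕ) (rest : List (List ℕ)),
    tInsL (r :: rest) ls = (rowInsSeq r ls).1 :: tInsL rest (rowInsSeq r ls).2
  | [], r, rest => rfl
  | a :: as, r, rest => by
      cases hb : (rowIns a r).2 with
      | none =>
          rw [tInsL_cons, tIns_cons_none rest hb, thread as]
          simp [rowInsSeq, hb]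
      | some b =>
          rw [tInsL_cons, tIns_cons_some rest hb, thread as]
          simp [rowInsSeq, hb]

theorem tIns_sorted {a : ℕ} : ∀ {T : List (List ℕ)}, (∀ r ∈ T, List.Pairwise (· ≤ ·) r) →
    ∀ r ∈ tIns a T, List.Pairwise (· ≤ ·) r
  | [], _ => by
      intro r hr
      simp at hr
      simp [hr]
  | s :: rest, hT => by
      intro r hr
      cases hb : (rowIns a s).2 with
      | none =>
          rw [tIns_cons_none rest hb] at hr
          rcases List.mem_cons.1 hr with rfl | hr
          · exact rowIns_sorted (hT s (by simp))
          · exact hT r (List.mem_cons_of_mem _ hr)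
      | some b =>
          rw [tIns_cons_some rest hb] at hr
          rcases List.mem_cons.1 hr with rfl | hr
          · exact rowIns_sorted (hT s (by simp))
          · exact tIns_sorted (fun r' hr' => hT r' (List.mem_cons_of_mem _ hr')) r hr

/-- result row of inserting three letters successively -/
def ins3row (r : List ℕ) (a1 a2 a3 : ℕ) : List ℕ :=
  (rowIns a3 (rowIns a2 (rowIns a1 r).1).1).1

/-- bumped letters (in order) of inserting three letters successively -/
def ins3b (r : List ℕ) (a1 a2 a3 : ℕ) : List ℕ :=
  (rowIns a1 r).2.toList ++ (rowIns a2 (rowIns a1 r).1).2.toList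
    ++ (rowIns a3 (rowIns a2 (rowIns a1 r).1).1).2.toList

/-- the bumped triples are again Knuth-related (in one of the two forms, possibly mirrored) -/
def TripRel (bA bB : List ℕ) : Prop :=
  ∃ p q s : ℕ,
    ((p ≤ q ∧ q < s) ∧ ((bA = [p,s,q] ∧ bB = [s,p,q]) ∨ (bA = [s,p,q] ∧ bB = [p,s,q]))) ∨
    ((p < q ∧ q ≤ s) ∧ ((bA = [q,p,s] ∧ bB = [q,s,p]) ∨ (bA = [q,s,p] ∧ bB = [q,p,s])))

theorem ins3_cons_le {e : ℕ} (r : List ℕ) {a1 a2 a3 : ℕ}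
    (h1 : e ≤ a1) (h2 : e ≤ a2) (h3 : e ≤ a3) :
    ins3row (e :: r) a1 a2 a3 = e :: ins3row r a1 a2 a3 ∧
    ins3b (e :: r) a1 a2 a3 = ins3b r a1 a2 a3 := by
  constructor <;>
    simp [ins3row, ins3b, rowIns_cons_le _ h1, rowIns_cons_le _ h2, rowIns_cons_le _ h3]

theorem rowT1 : ∀ (r : List ℕ), List.Pairwise (· ≤ ·) r → ∀ x y z : ℕ, x ≤ y → y < z →
    ins3row r x z y = ins3row r z x y ∧
    (ins3b r x z y = ins3b r z x y ∨ TripRel (ins3b r x z y) (ins3b r z x y)) := by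
  intro r
  induction r with
  | nil =>
      intro _ x y z hxy hyz
      have h1 : rowIns x ([] : List ℕ) = ([x], none) := rfl
      have h2 : rowIns z [x] = ([x,z], none) := by
        rw [rowIns_cons_le _ (by omega)]; rfl
      have h3 : rowIns y [x,z] = ([x,y], some z) := by
        rw [rowIns_cons_le _ hxy, rowIns_cons_gt _ hyz]
      have h4 : rowIns z ([] : List ℕ) = ([z], none) := rfl
      have h5 : rowIns x [z] = ([x], some z) := rowIns_cons_gt _ (by omega)
      have h6 : rowIns y [x] = ([x,y], none) := by
        rw [rowIns_cons_le _ hxy]; rfl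
      refine ⟨?_, Or.inl ?_⟩ <;> simp [ins3row, ins3b, h1, h2, h3, h4, h5, h6]
  | cons e r₀ ih =>
      intro hs x y z hxy hyz
      obtain ⟨he, hr₀⟩ := List.pairwise_cons.1 hs
      by_cases hex : e ≤ x
      · obtain ⟨hA1, hA2⟩ := ins3_cons_le r₀ hex (by omega : e ≤ z) (by omega : e ≤ y)
        obtain ⟨hB1, hB2⟩ := ins3_cons_le r₀ (by omega : e ≤ z) hex (by omega : e ≤ y)
        obtain ⟨ih1, ih2⟩ := ih hr₀ x y z hxy hyz
        rw [hA1, hB1, hA2, hB2, ih1]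
        exact ⟨rfl, ih2⟩
      · push_neg at hex   -- x < e
        have Ex : rowIns x (e :: r₀) = (x :: r₀, some e) := rowIns_cons_gt _ hex
        -- Order A is always: row = x :: (rowIns y Rz).1, bumps = [e] ++ bz ++ by
        have EA1 : rowIns z (x :: r₀) = (x :: (rowIns z r₀).1, (rowIns z r₀).2) :=
          rowIns_cons_le _ (by omega)
        have EA2 : rowIns y (x :: (rowIns z r₀).1) =
            (x :: (rowIns y (rowIns z r₀).1).1, (rowIns y (rowIns z r₀).1).2) :=
          rowIns_cons_le _ hxy
        have hArow : ins3row (e :: r₀) x z y = x :: (rowIns y (rowIns z r₀).1).1 := by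
          simp [ins3row, Ex, EA1, EA2]
        have hAb : ins3b (e :: r₀) x z y =
            [e] ++ (rowIns z r₀).2.toList ++ (rowIns y (rowIns z r₀).1).2.toList := by
          simp [ins3b, Ex, EA1, EA2]
        by_cases hez : e ≤ z
        · -- B2 : z recurses into r₀ first
          have EB1 : rowIns z (e :: r₀) = (e :: (rowIns z r₀).1, (rowIns z r₀).2) :=
            rowIns_cons_le _ hez
          have EB2 : rowIns x (e :: (rowIns z r₀).1) = (x :: (rowIns z r₀).1, some e) :=
            rowIns_cons_gt _ hex
          have EB3 : rowIns y (x :: (rowIns z r₀).1) =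
              (x :: (rowIns y (rowIns z r₀).1).1, (rowIns y (rowIns z r₀).1).2) :=
            rowIns_cons_le _ hxy
          have hBrow : ins3row (e :: r₀) z x y = x :: (rowIns y (rowIns z r₀).1).1 := by
            simp [ins3row, EB1, EB2, EB3]
          have hBb : ins3b (e :: r₀) z x y =
              (rowIns z r₀).2.toList ++ [e] ++ (rowIns y (rowIns z r₀).1).2.toList := by
            simp [ins3b, EB1, EB2, EB3]
          refine ⟨by rw [hArow, hBrow], ?_⟩
          cases hbz : (rowIns z r₀).2 with
          | none => left; rw [hAb, hBb, hbz]; simp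
          | some o =>
              right
              obtain ⟨q, hq⟩ :=
                rowIns_bump_some_of_mem (rowIns_self_mem z r₀) hyz
              refine ⟨e, q, o, Or.inl ⟨⟨?_, ?_⟩, Or.inl ⟨?_, ?_⟩⟩⟩
              · -- e ≤ q
                rcases rowIns_mem (rowIns_bump_mem hq) with h | h
                · exact he q h
                · omega
              · -- q < o
                have hqz : q ≤ z := rowIns_bump_min (rowIns_sorted hr₀) hq z
                  (rowIns_self_mem z r₀) hyz
                have hoz : z < o := rowIns_bump_gt hbz
                omega
              · rw [hAb, hbz, hq]; rfl
              · rw [hBb, hbz, hq]; rfl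
        · -- B1 : z bumps e immediately (z < e)
          push_neg at hez
          have EB1 : rowIns z (e :: r₀) = (z :: r₀, some e) := rowIns_cons_gt _ hez
          have EB2 : rowIns x (z :: r₀) = (x :: r₀, some z) := rowIns_cons_gt _ (by omega)
          have EB3 : rowIns y (x :: r₀) =
              (x :: (rowIns y r₀).1, (rowIns y r₀).2) := rowIns_cons_le _ hxy
          have hBrow : ins3row (e :: r₀) z x y = x :: (rowIns y r₀).1 := by
            simp [ins3row, EB1, EB2, EB3]
          have hBb : ins3b (e :: r₀) z x y =
              [e, z] ++ (rowIns y r₀).2.toList := by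
            simp [ins3b, EB1, EB2, EB3]
          cases r₀ with
          | nil =>
              have e1 : rowIns z ([] : List ℕ) = ([z], none) := rfl
              have e2 : rowIns y [z] = ([y], some z) := rowIns_cons_gt _ hyz
              have e3 : rowIns y ([] : List ℕ) = ([y], none) := rfl
              refine ⟨?_, Or.inl ?_⟩
              · rw [hArow, hBrow, e1]; simp [e2, e3]
              · rw [hAb, hBb, e1]; simp [e2, e3]
          | cons f r₁ =>
              have hef : e ≤ f := he f (by simp)
              have e1 : rowIns z (f :: r₁) = (z :: r₁, some f) := rowIns_cons_gt _ (by omega)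
              have e2 : rowIns y (z :: r₁) = (y :: r₁, some z) := rowIns_cons_gt _ hyz
              have e3 : rowIns y (f :: r₁) = (y :: r₁, some f) := rowIns_cons_gt _ (by omega)
              refine ⟨?_, Or.inr ⟨z, e, f, Or.inr ⟨⟨by omega, by omega⟩,
                  Or.inr ⟨?_, ?_⟩⟩⟩⟩
              · rw [hArow, hBrow, e1]; simp [e2, e3]
              · rw [hAb, e1]; simp [e2]
              · rw [hBb, e3]; rfl

theorem rowT2 : ∀ (r : List ℕ), List.Pairwise (· ≤ ·) r → ∀ x y z : ℕ, x < y → y ≤ z →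
    ins3row r y x z = ins3row r y z x ∧
    (ins3b r y x z = ins3b r y z x ∨ TripRel (ins3b r y x z) (ins3b r y z x)) := by
  intro r
  induction r with
  | nil =>
      intro _ x y z hxy hyz
      have h1 : rowIns y ([] : List ℕ) = ([y], none) := rfl
      have h2 : rowIns x [y] = ([x], some y) := rowIns_cons_gt _ hxy
      have h3 : rowIns z [x] = ([x,z], none) := by
        rw [rowIns_cons_le _ (by omega)]; rfl
      have h4 : rowIns z [y] = ([y,z], none) := by
        rw [rowIns_cons_le _ hyz]; rfl
      have h5 : rowIns x [y,z] = ([x,z], some y) := rowIns_cons_gt _ hxy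
      refine ⟨?_, Or.inl ?_⟩ <;> simp [ins3row, ins3b, h1, h2, h3, h4, h5]
  | cons e r₀ ih =>
      intro hs x y z hxy hyz
      obtain ⟨he, hr₀⟩ := List.pairwise_cons.1 hs
      by_cases hex : e ≤ x
      · obtain ⟨hA1, hA2⟩ := ins3_cons_le r₀ (by omega : e ≤ y) hex (by omega : e ≤ z)
        obtain ⟨hB1, hB2⟩ := ins3_cons_le r₀ (by omega : e ≤ y) (by omega : e ≤ z) hex
        obtain ⟨ih1, ih2⟩ := ih hr₀ x y z hxy hyz
        rw [hA1, hB1, hA2, hB2, ih1]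
        exact ⟨rfl, ih2⟩
      · push_neg at hex  -- x < e
        by_cases hey : e ≤ y
        · -- B2 : y recurses into r₀
          have Ey : rowIns y (e :: r₀) = (e :: (rowIns y r₀).1, (rowIns y r₀).2) :=
            rowIns_cons_le _ hey
          have EA2 : rowIns x (e :: (rowIns y r₀).1) = (x :: (rowIns y r₀).1, some e) :=
            rowIns_cons_gt _ hex
          have EA3 : rowIns z (x :: (rowIns y r₀).1) =
              (x :: (rowIns z (rowIns y r₀).1).1, (rowIns z (rowIns y r₀).1).2) :=
            rowIns_cons_le _ (by omega)
          have hArow : ins3row (e :: r₀) y x z = x :: (rowIns z (rowIns y r₀).1).1 := by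
            simp [ins3row, Ey, EA2, EA3]
          have hAb : ins3b (e :: r₀) y x z =
              (rowIns y r₀).2.toList ++ [e] ++ (rowIns z (rowIns y r₀).1).2.toList := by
            simp [ins3b, Ey, EA2, EA3]
          have EB2 : rowIns z (e :: (rowIns y r₀).1) =
              (e :: (rowIns z (rowIns y r₀).1).1, (rowIns z (rowIns y r₀).1).2) :=
            rowIns_cons_le _ (by omega)
          have EB3 : rowIns x (e :: (rowIns z (rowIns y r₀).1).1) =
              (x :: (rowIns z (rowIns y r₀).1).1, some e) := rowIns_cons_gt _ hex
          have hBrow : ins3row (e :: r₀) y z x = x :: (rowIns z (rowIns y r₀).1).1 := by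
            simp [ins3row, Ey, EB2, EB3]
          have hBb : ins3b (e :: r₀) y z x =
              (rowIns y r₀).2.toList ++ (rowIns z (rowIns y r₀).1).2.toList ++ [e] := by
            simp [ins3b, Ey, EB2, EB3]
          refine ⟨by rw [hArow, hBrow], ?_⟩
          cases hbz : (rowIns z (rowIns y r₀).1).2 with
          | none => left; rw [hAb, hBb, hbz]; simp
          | some o =>
              right
              -- the first bump must exist
              cases hby : (rowIns y r₀).2 with
              | none =>
                  exfalso
                  have hrow : (rowIns y r₀).1 = r₀ ++ [y] := rowIns_bump_none_row hby
                  have hall : ∀ c ∈ (rowIns y r₀).1, c ≤ z := by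
                    intro c hc
                    rw [hrow] at hc
                    rcases List.mem_append.1 hc with h | h
                    · exact le_trans (rowIns_bump_none hby c h) hyz
                    · simp at h; omega
                  have := rowIns_bump_gt hbz
                  have := hall o (rowIns_bump_mem hbz)
                  omega
              | some q =>
                  refine ⟨e, q, o, Or.inr ⟨⟨?_, ?_⟩, Or.inl ⟨?_, ?_⟩⟩⟩
                  · -- e < q
                    have := rowIns_bump_gt hby
                    omega
                  · -- q ≤ o
                    have hoy : o ∈ r₀ := by
                      rcases rowIns_mem (rowIns_bump_mem hbz) with h | h
                      · exact h
                      · exfalso; have := rowIns_bump_gt hbz; omega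
                    have hzo : z < o := rowIns_bump_gt hbz
                    exact rowIns_bump_min hr₀ hby o hoy (by omega)
                  · rw [hAb, hby, hbz]; rfl
                  · rw [hBb, hby, hbz]; rfl
        · -- B1 : y bumps e immediately (y < e)
          push_neg at hey
          have Ey : rowIns y (e :: r₀) = (y :: r₀, some e) := rowIns_cons_gt _ hey
          have EA2 : rowIns x (y :: r₀) = (x :: r₀, some y) := rowIns_cons_gt _ hxy
          have EA3 : rowIns z (x :: r₀) =
              (x :: (rowIns z r₀).1, (rowIns z r₀).2) := rowIns_cons_le _ (by omega)
          have hArow : ins3row (e :: r₀) y x z = x :: (rowIns z r₀).1 := by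
            simp [ins3row, Ey, EA2, EA3]
          have hAb : ins3b (e :: r₀) y x z = [e, y] ++ (rowIns z r₀).2.toList := by
            simp [ins3b, Ey, EA2, EA3]
          have EB2 : rowIns z (y :: r₀) =
              (y :: (rowIns z r₀).1, (rowIns z r₀).2) := rowIns_cons_le _ hyz
          have EB3 : rowIns x (y :: (rowIns z r₀).1) =
              (x :: (rowIns z r₀).1, some y) := rowIns_cons_gt _ hxy
          have hBrow : ins3row (e :: r₀) y z x = x :: (rowIns z r₀).1 := by
            simp [ins3row, Ey, EB2, EB3]
          have hBb : ins3b (e :: r₀) y z x =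
              [e] ++ (rowIns z r₀).2.toList ++ [y] := by
            simp [ins3b, Ey, EB2, EB3]
          refine ⟨by rw [hArow, hBrow], ?_⟩
          cases hbz : (rowIns z r₀).2 with
          | none => left; rw [hAb, hBb, hbz]; simp
          | some o =>
              right
              refine ⟨y, e, o, Or.inr ⟨⟨by omega, ?_⟩, Or.inl ⟨?_, ?_⟩⟩⟩
              · exact he o (rowIns_bump_mem hbz)
              · rw [hAb, hbz]; rfl
              · rw [hBb, hbz]; rfl

theorem rowInsSeq3 (r : List ℕ) (a b c : ℕ) :
    rowInsSeq r [a,b,c] = (ins3row r a b c, ins3b r a b c) := by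
  simp [rowInsSeq, ins3row, ins3b]

theorem tabKnuth : ∀ (T : List (List ℕ)), (∀ r ∈ T, List.Pairwise (· ≤ ·) r) →
    (∀ x y z : ℕ, x ≤ y → y < z → tInsL T [x,z,y] = tInsL T [z,x,y]) ∧
    (∀ x y z : ℕ, x < y → y ≤ z → tInsL T [y,x,z] = tInsL T [y,z,x]) := by
  intro T
  induction T with
  | nil =>
      intro _
      constructor
      · intro x y z hxy hyz
        have h2 : rowIns z [x] = ([x,z], none) := by
          rw [rowIns_cons_le _ (by omega)]; rfl
        have h3 : rowIns y [x,z] = ([x,y], some z) := by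
          rw [rowIns_cons_le _ hxy, rowIns_cons_gt _ hyz]
        have h5 : rowIns x [z] = ([x], some z) := rowIns_cons_gt _ (by omega)
        have h6 : rowIns y [x] = ([x,y], none) := by
          rw [rowIns_cons_le _ hxy]; rfl
        simp [tIns, h2, h3, h5, h6]
      · intro x y z hxy hyz
        have h2 : rowIns x [y] = ([x], some y) := rowIns_cons_gt _ hxy
        have h3 : rowIns z [x] = ([x,z], none) := by
          rw [rowIns_cons_le _ (by omega)]; rfl
        have h4 : rowIns z [y] = ([y,z], none) := by
          rw [rowIns_cons_le _ hyz]; rfl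
        have h5 : rowIns x [y,z] = ([x,z], some y) := rowIns_cons_gt _ hxy
        simp [tIns, h2, h3, h4, h5]
  | cons r rest ih =>
      intro hT
      have hr : List.Pairwise (· ≤ ·) r := hT r (by simp)
      have hrest : ∀ s ∈ rest, List.Pairwise (· ≤ ·) s := fun s hs => hT s (by simp [hs])
      obtain ⟨ih1, ih2⟩ := ih hrest
      constructor
      · intro x y z hxy hyz
        rw [thread [x,z,y] r rest, thread [z,x,y] r rest, rowInsSeq3, rowInsSeq3]
        obtain ⟨hrow, hb⟩ := rowT1 r hr x y z hxy hyz
        rw [hrow]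
        rcases hb with hb | ⟨p, q, s, h⟩
        · rw [hb]
        · rcases h with ⟨⟨h1, h2⟩, ⟨hA, hB⟩ | ⟨hA, hB⟩⟩ | ⟨⟨h1, h2⟩, ⟨hA, hB⟩ | ⟨hA, hB⟩⟩ <;>
            rw [hA, hB]
          exacts [by rw [ih1 p q s h1 h2], by rw [ih1 p q s h1 h2],
            by rw [ih2 p q s h1 h2], by rw [ih2 p q s h1 h2]]
      · intro x y z hxy hyz
        rw [thread [y,x,z] r rest, thread [y,z,x] r rest, rowInsSeq3, rowInsSeq3]
        obtain ⟨hrow, hb⟩ := rowT2 r hr x y z hxy hyz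
        rw [hrow]
        rcases hb with hb | ⟨p, q, s, h⟩
        · rw [hb]
        · rcases h with ⟨⟨h1, h2⟩, ⟨hA, hB⟩ | ⟨hA, hB⟩⟩ | ⟨⟨h1, h2⟩, ⟨hA, hB⟩ | ⟨hA, hB⟩⟩ <;>
            rw [hA, hB]
          exacts [by rw [ih1 p q s h1 h2], by rw [ih1 p q s h1 h2],
            by rw [ih2 p q s h1 h2], by rw [ih2 p q s h1 h2]]

theorem tInsL_sorted : ∀ (ls : List ℕ) (T : List (List ℕ)),
    (∀ r ∈ T, List.Pairwise (· ≤ ·) r) → ∀ r ∈ tInsL T ls, List.Pairwise (· ≤ ·) r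
  | [], T, hT => hT
  | a :: as, T, hT => tInsL_sorted as (tIns a T) (tIns_sorted hT)

theorem tInsL_step {u v : List ℕ} (h : KnuthStep u v) (T : List (List ℕ))
    (hT : ∀ r ∈ T, List.Pairwise (· ≤ ·) r) : tInsL T u = tInsL T v := by
  cases h with
  | xzy p s x y z h1 h2 =>
      have e : ∀ w1 w2 w3 : ℕ, p ++ w1 :: w2 :: w3 :: s = (p ++ [w1, w2, w3]) ++ s := by
        intro w1 w2 w3; simp
      rw [e, e, tInsL_append, tInsL_append, tInsL_append, tInsL_append]
      congr 1
      exact (tabKnuth (tInsL T p) (tInsL_sorted p T hT)).1 x y z h1 h2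
  | yxz p s x y z h1 h2 =>
      have e : ∀ w1 w2 w3 : ℕ, p ++ w1 :: w2 :: w3 :: s = (p ++ [w1, w2, w3]) ++ s := by
        intro w1 w2 w3; simp
      rw [e, e, tInsL_append, tInsL_append, tInsL_append, tInsL_append]
      congr 1
      exact (tabKnuth (tInsL T p) (tInsL_sorted p T hT)).2 x y z h1 h2

def Pt (w : List ℕ) : List (List ℕ) := tInsL [] w

theorem Pt_eq_of_equiv {u v : List ℕ} (h : KnuthEquiv u v) : Pt u = Pt v := by
  induction h with
  | rel a b hab => exact tInsL_step hab [] (by simp)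
  | refl a => rfl
  | symm a b _ ih => exact ih.symm
  | trans a b c _ _ ih1 ih2 => exact ih1.trans ih2

def readT : List (List ℕ) → List ℕ
  | [] => []
  | r :: rest => readT rest ++ r

theorem bubble_left : ∀ (t : List ℕ) (b a : ℕ), a < b → List.Pairwise (· ≤ ·) (b :: t) →
    KnuthEquiv ((b :: t) ++ [a]) (b :: a :: t)
  | [], b, a, _, _ => ke_refl _
  | c :: t', b, a, hab, hs => by
      have hbc : b ≤ c := (List.pairwise_cons.1 hs).1 c (by simp)
      have hs' : List.Pairwise (· ≤ ·) (c :: t') := (List.pairwise_cons.1 hs).2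
      have hac : a < c := lt_of_lt_of_le hab hbc
      have ih := bubble_left t' c a hac hs'
      have h1 : KnuthEquiv (b :: ((c :: t') ++ [a])) (b :: c :: a :: t') := ke_cons b ih
      have h2 : KnuthStep ([] ++ b :: a :: c :: t') ([] ++ b :: c :: a :: t') :=
        KnuthStep.yxz [] t' a b c hab hbc
      simp only [List.nil_append] at h2
      exact ke_trans h1 (ke_symm (ke_rel h2))

theorem bubble_b : ∀ (l : List ℕ) (a b : ℕ) (t : List ℕ), List.Pairwise (· ≤ ·) l →
    (∀ e ∈ l, e ≤ a) → a < b →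
    KnuthEquiv (l ++ b :: a :: t) (b :: (l ++ a :: t))
  | [], a, b, t, _, _, _ => ke_refl _
  | e :: l', a, b, t, hs, hle, hab => by
      have hea : e ≤ a := hle e (by simp)
      have ih := bubble_b l' a b t (List.pairwise_cons.1 hs).2
        (fun c hc => hle c (by simp [hc])) hab
      have h1 : KnuthEquiv (e :: (l' ++ b :: a :: t)) (e :: b :: (l' ++ a :: t)) := ke_cons e ih
      have h2 : KnuthEquiv (e :: b :: (l' ++ a :: t)) (b :: e :: (l' ++ a :: t)) := by
        cases l' with
        | nil =>
            have := KnuthStep.xzy ([] : List ℕ) t e a b hea hab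
            simpa using ke_rel this
        | cons f l'' =>
            have hef : e ≤ f := (List.pairwise_cons.1 hs).1 f (by simp)
            have hfb : f ≤ a := hle f (by simp)
            have := KnuthStep.xzy ([] : List ℕ) (l'' ++ a :: t) e f b hef (by omega)
            simpa using ke_rel this
      exact ke_trans h1 h2

theorem rowBump {a b : ℕ} : ∀ {r : List ℕ}, List.Pairwise (· ≤ ·) r →
    (rowIns a r).2 = some b → KnuthEquiv (r ++ [a]) (b :: (rowIns a r).1)
  | [], _, h => by simp [rowIns] at h
  | e :: r₀, hs, h => by
      by_cases hae : a < e
      · rw [rowIns_cons_gt _ hae] at h ⊢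
        simp only [Option.some.injEq] at h
        subst h
        exact bubble_left r₀ _ a hae hs
      · push_neg at hae
        rw [rowIns_cons_le _ hae] at h ⊢
        have hs₀ : List.Pairwise (· ≤ ·) r₀ := (List.pairwise_cons.1 hs).2
        have ih := rowBump hs₀ h
        have h1 : KnuthEquiv (e :: (r₀ ++ [a])) (e :: b :: (rowIns a r₀).1) := ke_cons e ih
        -- now move b past e
        obtain ⟨w, R', hR⟩ : ∃ w R', (rowIns a r₀).1 = w :: R' := by
          cases hr : (rowIns a r₀).1 with
          | nil => exact absurd (hr ▸ rowIns_self_mem a r₀) List.not_mem_nil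
          | cons w R' => exact ⟨w, R', rfl⟩
        have hwa : w ≤ a := by
          have hmem : a ∈ (rowIns a r₀).1 := rowIns_self_mem a r₀
          rw [hR] at hmem
          have hsR : List.Pairwise (· ≤ ·) (w :: R') := hR ▸ rowIns_sorted hs₀
          rcases List.mem_cons.1 hmem with rfl | hmem
          · exact le_refl _
          · exact (List.pairwise_cons.1 hsR).1 a hmem
        have hew : e ≤ w := by
          have := rowIns_mem (c := w) (hR ▸ (by simp : w ∈ w :: R'))
          rcases this with hw | rfl
          · exact (List.pairwise_cons.1 hs).1 w hw
          · exact hae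
        have hab : a < b := rowIns_bump_gt h
        have h2 : KnuthEquiv (e :: b :: w :: R') (b :: e :: w :: R') := by
          have := KnuthStep.xzy ([] : List ℕ) R' e w b hew (by omega)
          simpa using ke_rel this
        rw [hR] at h1
        rw [hR]
        exact ke_trans h1 h2

theorem readIns : ∀ (T : List (List ℕ)), (∀ r ∈ T, List.Pairwise (· ≤ ·) r) → ∀ a : ℕ,
    KnuthEquiv (readT T ++ [a]) (readT (tIns a T))
  | [], _, a => by simp [readT]; exact ke_refl _
  | r :: rest, hT, a => by
      cases hb : (rowIns a r).2 with
      | none =>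
          rw [tIns_cons_none rest hb]
          simp only [readT, rowIns_bump_none_row hb, List.append_assoc]
          exact ke_refl _
      | some b =>
          rw [tIns_cons_some rest hb]
          have hr : List.Pairwise (· ≤ ·) r := hT r (by simp)
          have step1 : KnuthEquiv (readT rest ++ r ++ [a])
              (readT rest ++ (b :: (rowIns a r).1)) := by
            rw [List.append_assoc]
            exact ke_append_left _ (rowBump hr hb)
          have step2 : KnuthEquiv ((readT rest ++ [b]) ++ (rowIns a r).1)
              (readT (tIns b rest) ++ (rowIns a r).1) :=
            ke_append_right _ (readIns rest (fun s hs => hT s (by simp [hs])) b)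
          simp only [readT]
          refine ke_trans step1 (ke_trans ?_ step2)
          simp only [List.append_assoc, List.singleton_append]
          exact ke_refl _

theorem readP : ∀ (w : List ℕ), KnuthEquiv w (readT (Pt w)) := by
  intro w
  induction w using List.reverseRecOn with
  | nil => exact ke_refl _
  | append_singleton w a ih =>
      have h1 : Pt (w ++ [a]) = tIns a (Pt w) := by
        rw [Pt, tInsL_append]; rfl
      rw [h1]
      refine ke_trans (ke_append_right [a] ih) ?_
      exact readIns (Pt w) (tInsL_sorted w [] (by simp)) a

/-- prepend a full column `c, c+1, ..., c+m-1` to a tableau -/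
def addcol : ℕ → ℕ → List (List ℕ) → List (List ℕ)
  | _, 0, T => T
  | c, m+1, [] => [c] :: addcol (c+1) m []
  | c, m+1, r :: rest => (c :: r) :: addcol (c+1) m rest

/-- row `i` (from depth `c`) has entries `≥ c + i` -/
def vbd : ℕ → List (List ℕ) → Prop
  | _, [] => True
  | c, r :: rest => (∀ e ∈ r, c ≤ e) ∧ vbd (c+1) rest

theorem vbd_tIns : ∀ (T : List (List ℕ)) (c a : ℕ), vbd c T → c ≤ a → vbd c (tIns a T)
  | [], c, a, _, hca => by
      refine ⟨?_, trivial⟩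
      intro e he; simp at he; omega
  | r :: rest, c, a, hv, hca => by
      obtain ⟨hr, hrest⟩ := hv
      cases hb : (rowIns a r).2 with
      | none =>
          rw [tIns_cons_none rest hb]
          refine ⟨?_, hrest⟩
          intro e he
          rcases rowIns_mem he with h | rfl
          · exact hr e h
          · exact hca
      | some b =>
          rw [tIns_cons_some rest hb]
          refine ⟨?_, ?_⟩
          · intro e he
            rcases rowIns_mem he with h | rfl
            · exact hr e h
            · exact hca
          · have hb1 : c + 1 ≤ b := by
              have := rowIns_bump_gt hb; omega
            exact vbd_tIns rest (c+1) b hrest hb1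

theorem ne_nil_tIns : ∀ (T : List (List ℕ)) (a : ℕ), (∀ r ∈ T, r ≠ []) →
    ∀ r ∈ tIns a T, r ≠ []
  | [], a, _ => by intro r hr; simp only [tIns] at hr; simp at hr; simp [hr]
  | s :: rest, a, hT => by
      intro r hr
      cases hb : (rowIns a s).2 with
      | none =>
          rw [tIns_cons_none rest hb] at hr
          rcases List.mem_cons.1 hr with rfl | hr
          · exact List.ne_nil_of_mem (rowIns_self_mem a s)
          · exact hT r (by simp [hr])
      | some b =>
          rw [tIns_cons_some rest hb] at hr
          rcases List.mem_cons.1 hr with rfl | hr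
          · exact List.ne_nil_of_mem (rowIns_self_mem a s)
          · exact ne_nil_tIns rest b (fun r' h' => hT r' (by simp [h'])) r hr

theorem bound_tIns : ∀ (T : List (List ℕ)) (a k : ℕ), (∀ r ∈ T, ∀ e ∈ r, e ≤ k) → a ≤ k →
    ∀ r ∈ tIns a T, ∀ e ∈ r, e ≤ k
  | [], a, k, _, hak => by
      intro r hr e he; simp only [tIns] at hr; simp at hr; subst hr; simp at he; omega
  | s :: rest, a, k, hT, hak => by
      intro r hr e he
      cases hb : (rowIns a s).2 with
      | none =>
          rw [tIns_cons_none rest hb] at hr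
          rcases List.mem_cons.1 hr with rfl | hr
          · rcases rowIns_mem he with h | rfl
            · exact hT s (by simp) e h
            · exact hak
          · exact hT r (by simp [hr]) e he
      | some b =>
          rw [tIns_cons_some rest hb] at hr
          rcases List.mem_cons.1 hr with rfl | hr
          · rcases rowIns_mem he with h | rfl
            · exact hT s (by simp) e h
            · exact hak
          · exact bound_tIns rest b k (fun r' h' => hT r' (by simp [h']))
              (hT s (by simp) b (rowIns_bump_mem hb)) r hr e he

/-- key: inserting a letter of the alphabet commutes with prepending a full column -/
theorem colIns : ∀ (m c : ℕ) (T : List (List ℕ)) (a : ℕ),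
    vbd c T → (∀ r ∈ T, ∀ e ∈ r, e < c + m) → c ≤ a → a < c + m →
    tIns a (addcol c m T) = addcol c m (tIns a T)
  | 0, c, T, a, _, _, hca, ha => by omega
  | m+1, c, [], a, _, _, hca, ha => by
      have h1 : rowIns a [c] = ([c, a], none) := by
        rw [rowIns_cons_le _ hca]; rfl
      rw [show addcol c (m+1) [] = [c] :: addcol (c+1) m [] from rfl,
        tIns_cons_none _ (show (rowIns a [c]).2 = none by rw [h1]), h1]
      rfl
  | m+1, c, r :: rest, a, hv, hbd, hca, ha => by
      obtain ⟨hr, hrest⟩ := hv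
      rw [show addcol c (m+1) (r :: rest) = (c :: r) :: addcol (c+1) m rest from rfl]
      have h1 : rowIns a (c :: r) = (c :: (rowIns a r).1, (rowIns a r).2) :=
        rowIns_cons_le _ hca
      cases hb : (rowIns a r).2 with
      | none =>
          rw [tIns_cons_none _ (by rw [h1]; exact hb), h1, hb]
          rw [tIns_cons_none rest hb]
          rfl
      | some b =>
          rw [tIns_cons_some _ (show (rowIns a (c::r)).2 = some b by rw [h1]; exact hb), h1]
          rw [tIns_cons_some rest hb]
          have hbmem : b ∈ r := rowIns_bump_mem hb
          have hbgt : a < b := rowIns_bump_gt hb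
          have ih := colIns m (c+1) rest b hrest
            (fun r' h' e he => by have := hbd r' (by simp [h']) e he; omega)
            (by omega) (by have := hbd r (by simp) b hbmem; omega)
          rw [ih]
          rfl

theorem colStep : ∀ (m c : ℕ), tIns c (addcol (c+1) m []) = addcol c (m+1) []
  | 0, c => rfl
  | m+1, c => by
      rw [show addcol (c+1) (m+1) [] = [c+1] :: addcol (c+2) m [] from rfl]
      have h1 : rowIns c [c+1] = ([c], some (c+1)) := rowIns_cons_gt _ (by omega)
      rw [tIns_cons_some _ (by rw [h1] : (rowIns c [c+1]).2 = some (c+1)), h1,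
        colStep m (c+1)]
      rfl

theorem Pcol : ∀ (k j : ℕ), tInsL (addcol (k+1) j []) (fullColumn k) = addcol 1 (k+j) []
  | 0, j => by simp [fullColumn]
  | k+1, j => by
      rw [fullColumn_succ, tInsL_cons, colStep j (k+1), Pcol k (j+1)]
      congr 1
      omega

theorem Pt_fullColumn (k : ℕ) : Pt (fullColumn k) = addcol 1 k [] := by
  have := Pcol k 0
  simpa [Pt, show addcol (k+1) 0 [] = [] from rfl] using this

theorem addcol_inj : ∀ (m c : ℕ) (T T' : List (List ℕ)), (∀ r ∈ T, r ≠ []) →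
    (∀ r ∈ T', r ≠ []) → addcol c m T = addcol c m T' → T = T'
  | 0, c, T, T', _, _, h => h
  | m+1, c, [], [], _, _, _ => rfl
  | m+1, c, [], r' :: rest', _, hT', h => by
      rw [show addcol c (m+1) [] = [c] :: addcol (c+1) m [] from rfl,
        show addcol c (m+1) (r' :: rest') = (c :: r') :: addcol (c+1) m rest' from rfl] at h
      simp only [List.cons.injEq] at h
      exact absurd h.1.2.symm (hT' r' (by simp))
  | m+1, c, r :: rest, [], hT, _, h => by
      rw [show addcol c (m+1) [] = [c] :: addcol (c+1) m [] from rfl,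
        show addcol c (m+1) (r :: rest) = (c :: r) :: addcol (c+1) m rest from rfl] at h
      simp only [List.cons.injEq] at h
      exact absurd h.1.2 (hT r (by simp))
  | m+1, c, r :: rest, r' :: rest', hT, hT', h => by
      rw [show addcol c (m+1) (r :: rest) = (c :: r) :: addcol (c+1) m rest from rfl,
        show addcol c (m+1) (r' :: rest') = (c :: r') :: addcol (c+1) m rest' from rfl] at h
      simp only [List.cons.injEq] at h
      have := addcol_inj m (c+1) rest rest' (fun s hs => hT s (by simp [hs]))
        (fun s hs => hT' s (by simp [hs])) h.2
      rw [this, h.1.2]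

/-- inserting a word of the alphabet commutes with prepending the full column -/
theorem colInsL : ∀ (w : List ℕ) (k : ℕ) (T : List (List ℕ)),
    (∀ x ∈ w, 1 ≤ x ∧ x ≤ k) → vbd 1 T → (∀ r ∈ T, ∀ e ∈ r, e ≤ k) →
    tInsL (addcol 1 k T) w = addcol 1 k (tInsL T w)
  | [], k, T, _, _, _ => by simp
  | a :: w', k, T, hw, hv, hbd => by
      obtain ⟨ha1, ha2⟩ := hw a (by simp)
      rw [tInsL_cons, colIns k 1 T a hv (fun r h e he => by have := hbd r h e he; omega)
        ha1 (by omega), tInsL_cons]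
      exact colInsL w' k (tIns a T) (fun x hx => hw x (by simp [hx]))
        (vbd_tIns T 1 a hv ha1) (bound_tIns T a k hbd ha2)


theorem tInsL_ne_nil : ∀ (ls : List ℕ) (T : List (List ℕ)), (∀ r ∈ T, r ≠ []) →
    ∀ r ∈ tInsL T ls, r ≠ []
  | [], _, hT => hT
  | a :: as, T, hT => tInsL_ne_nil as _ (ne_nil_tIns T a hT)

theorem Pt_col_append (k : ℕ) (w : List ℕ) (hw : ∀ x ∈ w, 1 ≤ x ∧ x ≤ k) :
    Pt (fullColumn k ++ w) = addcol 1 k (Pt w) := by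
  rw [Pt, tInsL_append, show tInsL [] (fullColumn k) = Pt (fullColumn k) from rfl,
    Pt_fullColumn]
  exact colInsL w k [] hw trivial (by simp)

end KnuthAux

open KnuthAux in
/-- **Commutation and cancellation of a full column in the plactic monoid.**
For all words `w` and `v` over the alphabet `[k]`:
(i) `C·w` is Knuth-equivalent to `w·C`;
(ii) `C·w ≃ C·v` if and only if `w ≃ v`. -/
theorem fullColumn_knuth (k : ℕ) (w v : List ℕ)
    (hw : ∀ x ∈ w, 1 ≤ x ∧ x ≤ k) (hv : ∀ x ∈ v, 1 ≤ x ∧ x ≤ k) :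
    KnuthEquiv (fullColumn k ++ w) (w ++ fullColumn k) ∧
    (KnuthEquiv (fullColumn k ++ w) (fullColumn k ++ v) ↔ KnuthEquiv w v) := by
  refine ⟨col_comm_word k w hw, ?_, fun h => ke_append_left (fullColumn k) h⟩
  intro h
  have hP : Pt (fullColumn k ++ w) = Pt (fullColumn k ++ v) := Pt_eq_of_equiv h
  rw [Pt_col_append k w hw, Pt_col_append k v hv] at hP
  have hPwv : Pt w = Pt v :=
    addcol_inj k 1 _ _ (tInsL_ne_nil w [] (by simp)) (tInsL_ne_nil v [] (by simp)) hP
  refine ke_trans (readP w) ?_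
  rw [hPwv]
  exact ke_symm (readP v)
end
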